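/- arXiv:math/9910100 — 5 statements merged into one kernel-verified Lean document; each statement's English description precedes it below -/
import Mathlib

section
/- For constants a > 0, b ∈ ℝ, and C := (a² + 1/a² + b²)/2, the function f(t) := √((a² − C)·cos(2t) + a·b·sin(2t) + C) is well-defined (the expression under the square root is positive for all t ∈ ℝ), and satisfies f''(t) + f(t) = 1/f(t)³ for all t, with f(0) = a and f'(0) = b. -/
/-!
Writing `f = √g`, the equation `f'' + α f = β / f³` becomes `2 g g'' - g'² + 4 α g² = 4 β`.
For `g = p cos (ω t) + q sin (ω t) + C` one has `g'' = -ω² (g - C)` and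
`g'² = ω² (p² + q² - (g - C)²)`, so `2 g g'' - g'² + ω² g²` is the constant
`ω² (C² - p² - q²)`. With `ω = 2`, `p = a² - C`, `q = a b` and the given `C` one has
`p² + q² = C² - 1`, so this constant is `4`, and `|p cos + q sin| ≤ √(C² - 1) < C` keeps `g` positive.
-/

open Real

section SqrtSecondDeriv

variable {g g' g'' : ℝ → ℝ}

theorem deriv_sqrt_comp (hg : ∀ t, HasDerivAt g (g' t) t) (hpos : ∀ t, 0 < g t) :
    deriv (fun s => √(g s)) = fun t => g' t / (2 * √(g t)) :=
  funext fun t => ((hg t).sqrt (hpos t).ne').deriv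

theorem deriv_deriv_sqrt_comp (hg : ∀ t, HasDerivAt g (g' t) t)
    (hg' : ∀ t, HasDerivAt g' (g'' t) t) (hpos : ∀ t, 0 < g t) (t : ℝ) :
    deriv (deriv fun s => √(g s)) t = (2 * g t * g'' t - g' t ^ 2) / (4 * √(g t) ^ 3) := by
  have hsqrt : 0 < √(g t) := sqrt_pos.mpr (hpos t)
  have hsq : √(g t) ^ 2 = g t := sq_sqrt (hpos t).le
  have hden := ((hg t).sqrt (hpos t).ne').const_mul 2
  rw [deriv_sqrt_comp hg hpos, ((hg' t).fun_div hden (by positivity)).deriv]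
  field_simp
  rw [hsq]
  ring

theorem sqrt_comp_solves_ode {α β : ℝ} (hg : ∀ t, HasDerivAt g (g' t) t)
    (hg' : ∀ t, HasDerivAt g' (g'' t) t) (hpos : ∀ t, 0 < g t)
    (hid : ∀ t, 2 * g t * g'' t - g' t ^ 2 + 4 * α * g t ^ 2 = 4 * β) (t : ℝ) :
    deriv (deriv fun s => √(g s)) t + α * √(g t) = β / √(g t) ^ 3 := by
  have hsqrt : 0 < √(g t) := sqrt_pos.mpr (hpos t)
  have hsq : √(g t) ^ 2 = g t := sq_sqrt (hpos t).le
  rw [deriv_deriv_sqrt_comp hg hg' hpos]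
  field_simp
  linear_combination hid t + 4 * α * (√(g t) ^ 2 + g t) * hsq

end SqrtSecondDeriv

section Sinusoid

variable (p q C ω : ℝ)

theorem hasDerivAt_mul_cos_add_mul_sin_add (t : ℝ) :
    HasDerivAt (fun s => p * cos (ω * s) + q * sin (ω * s) + C)
      (ω * (q * cos (ω * t) - p * sin (ω * t))) t := by
  have hlin : HasDerivAt (fun s => ω * s) ω t := by simpa using (hasDerivAt_id t).const_mul ω
  have hcos := ((hasDerivAt_cos (ω * t)).comp t hlin).const_mul p
  have hsin := ((hasDerivAt_sin (ω * t)).comp t hlin).const_mul q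
  exact ((hcos.add hsin).add_const C).congr_deriv (by ring)

theorem hasDerivAt_const_mul_mul_cos_sub_mul_sin (t : ℝ) :
    HasDerivAt (fun s => ω * (q * cos (ω * s) - p * sin (ω * s)))
      (-ω ^ 2 * (p * cos (ω * t) + q * sin (ω * t))) t := by
  have hlin : HasDerivAt (fun s => ω * s) ω t := by simpa using (hasDerivAt_id t).const_mul ω
  have hcos := ((hasDerivAt_cos (ω * t)).comp t hlin).const_mul q
  have hsin := ((hasDerivAt_sin (ω * t)).comp t hlin).const_mul p
  exact ((hcos.sub hsin).const_mul ω).congr_deriv (by ring)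

theorem mul_cos_add_mul_sin_add_invariant (t : ℝ) :
    2 * (p * cos (ω * t) + q * sin (ω * t) + C) * (-ω ^ 2 * (p * cos (ω * t) + q * sin (ω * t)))
      - (ω * (q * cos (ω * t) - p * sin (ω * t))) ^ 2
      + ω ^ 2 * (p * cos (ω * t) + q * sin (ω * t) + C) ^ 2 = ω ^ 2 * (C ^ 2 - p ^ 2 - q ^ 2) := by
  linear_combination (-ω ^ 2 * (p ^ 2 + q ^ 2)) * sin_sq_add_cos_sq (ω * t)

variable {p q C}

theorem mul_cos_add_mul_sin_add_pos (hC : 0 < C) (hpq : p ^ 2 + q ^ 2 < C ^ 2) (x : ℝ) :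
    0 < p * cos x + q * sin x + C := by
  have hamp : (p * cos x + q * sin x) ^ 2 < C ^ 2 := by
    nlinarith [sq_nonneg (p * sin x - q * cos x), sin_sq_add_cos_sq x]
  nlinarith

end Sinusoid

theorem sq_sub_add_mul_sq_eq_sq_sub_one {a b C : ℝ} (ha : a ≠ 0)
    (hC : C = (a ^ 2 + 1 / a ^ 2 + b ^ 2) / 2) : (a ^ 2 - C) ^ 2 + (a * b) ^ 2 = C ^ 2 - 1 := by
  subst hC
  field_simp
  ring

/-- Explicit solution of f'' + f = 1/f³ with f(0)=a, f'(0)=b (case λ = λ̃ = 1). -/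
theorem stmt_1 (a b : ℝ) (ha : 0 < a) (C : ℝ) (hC : C = (a ^ 2 + 1 / a ^ 2 + b ^ 2) / 2)
    (f : ℝ → ℝ)
    (hf : ∀ t, f t = Real.sqrt ((a ^ 2 - C) * Real.cos (2 * t) + a * b * Real.sin (2 * t) + C)) :
    (∀ t : ℝ, 0 < (a ^ 2 - C) * Real.cos (2 * t) + a * b * Real.sin (2 * t) + C) ∧
    (∀ t : ℝ, deriv (deriv f) t + f t = 1 / f t ^ 3) ∧
    f 0 = a ∧ deriv f 0 = b := by
  have hpq := sq_sub_add_mul_sq_eq_sq_sub_one ha.ne' hC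
  have hCpos : 0 < C := by rw [hC]; positivity
  have hpos : ∀ t, 0 < (a ^ 2 - C) * cos (2 * t) + a * b * sin (2 * t) + C :=
    fun t => mul_cos_add_mul_sin_add_pos hCpos (by linarith) (2 * t)
  obtain rfl : f = fun t => √((a ^ 2 - C) * cos (2 * t) + a * b * sin (2 * t) + C) := funext hf
  have hg := hasDerivAt_mul_cos_add_mul_sin_add (a ^ 2 - C) (a * b) C 2
  have hg' := hasDerivAt_const_mul_mul_cos_sub_mul_sin (a ^ 2 - C) (a * b) 2
  refine ⟨hpos, fun t => ?_, ?_, ?_⟩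
  · simpa using sqrt_comp_solves_ode (α := 1) (β := 1) hg hg' hpos (fun s => by
      linear_combination mul_cos_add_mul_sin_add_invariant (a ^ 2 - C) (a * b) C 2 s - 4 * hpq) t
  · simp [sqrt_sq ha.le]
  · rw [deriv_sqrt_comp hg hpos]
    simp only [mul_zero, cos_zero, mul_one, sin_zero, sub_zero, add_zero, sub_add_cancel, sqrt_sq ha.le]
    field_simp
end

section
/- Let a > 0, b ∈ ℝ, C := (a² + 1/a² + b²)/2, and f(t) := √((a² − C)·cos(2t) + a·b·sin(2t) + C). Then for every r ∈ ℝ, ∫_{r}^{r+π} 1/f(t)² dt = π. -/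
open Real MeasureTheory Filter Topology Set

/-!
Writing `f t ^ 2 = A cos 2t + B sin 2t + C` as the quadratic form
`(C - A) sin² t + 2 B sin t cos t + (C + A) cos² t`, whose determinant `C² - A² - B²` equals `1`
for the given `C`, the function `arctan ((C - A) tan t + B)` is an antiderivative of `1 / f t ^ 2`
on `(-π/2, π/2)`. It increases from `-π/2` to `π/2` there, and `1 / f t ^ 2` is `π`-periodic,
so every window of length `π` gives `π`.
-/

namespace Real

variable {p q r s : ℝ}

lemma sin_cos_quadForm_pos (hp : 0 < p) (hdisc : p * r - q ^ 2 = s ^ 2) (hs : 0 < s) (t : ℝ) :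
    0 < p * sin t ^ 2 + 2 * q * sin t * cos t + r * cos t ^ 2 := by
  have hsq : p * (p * sin t ^ 2 + 2 * q * sin t * cos t + r * cos t ^ 2)
      = (p * sin t + q * cos t) ^ 2 + s ^ 2 * cos t ^ 2 := by
    linear_combination cos t ^ 2 * hdisc
  rcases eq_or_ne (cos t) 0 with hc | hc
  · have : sin t ^ 2 = 1 := by nlinarith [sin_sq_add_cos_sq t]
    simp [hc, this, hp]
  · exact pos_of_mul_pos_right (hsq ▸ by positivity) hp.le

lemma hasDerivAt_arctan_tan_div (hp : 0 < p) (hdisc : p * r - q ^ 2 = s ^ 2) (hs : 0 < s)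
    {t : ℝ} (ht : cos t ≠ 0) :
    HasDerivAt (fun t ↦ arctan ((p * tan t + q) / s) / s)
      (1 / (p * sin t ^ 2 + 2 * q * sin t * cos t + r * cos t ^ 2)) t := by
  have h := ((((hasDerivAt_tan ht).const_mul p).add_const q).div_const s).arctan.div_const s
  refine h.congr_deriv ?_
  have hQ := (sin_cos_quadForm_pos hp hdisc hs t).ne'
  rw [tan_eq_sin_div_cos]
  field_simp
  rw [eq_div_iff (by convert hQ using 1; ring)]
  linear_combination cos t ^ 2 * hdisc

theorem integral_inv_sin_cos_quadForm (hp : 0 < p) (hdisc : p * r - q ^ 2 = s ^ 2) (hs : 0 < s) :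
    ∫ t in (-(π / 2))..(π / 2), 1 / (p * sin t ^ 2 + 2 * q * sin t * cos t + r * cos t ^ 2)
      = π / s := by
  have hbot : Tendsto (fun t ↦ (p * tan t + q) / s) (𝓝[>] (-(π / 2))) atBot :=
    (tendsto_atBot_add_const_right _ q
      (tendsto_tan_neg_pi_div_two.const_mul_atBot hp)).atBot_div_const hs
  have htop : Tendsto (fun t ↦ (p * tan t + q) / s) (𝓝[<] (π / 2)) atTop :=
    (tendsto_atTop_add_const_right _ q
      (tendsto_tan_pi_div_two.const_mul_atTop hp)).atTop_div_const hs
  rw [intervalIntegral.integral_eq_sub_of_hasDerivAt_of_tendsto (by linarith [pi_pos])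
    (fun t ht ↦ hasDerivAt_arctan_tan_div hp hdisc hs (cos_pos_of_mem_Ioo ht).ne')
    ((continuous_const.div (by fun_prop) fun t ↦
      (sin_cos_quadForm_pos hp hdisc hs t).ne').intervalIntegrable _ _)
    (((tendsto_arctan_atBot.mono_right nhdsWithin_le_nhds).comp hbot).div_const s)
    (((tendsto_arctan_atTop.mono_right nhdsWithin_le_nhds).comp htop).div_const s)]
  ring

lemma cos_two_mul_add_sin_two_mul_add (A B C t : ℝ) :
    A * cos (2 * t) + B * sin (2 * t) + C
      = (C - A) * sin t ^ 2 + 2 * B * sin t * cos t + (C + A) * cos t ^ 2 := by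
  rw [cos_two_mul, sin_two_mul]
  linear_combination (A - C) * sin_sq_add_cos_sq t

variable {A B C : ℝ}

lemma cos_two_mul_add_sin_two_mul_add_pos (hC : 0 < C) (hs : 0 < s)
    (hdisc : A ^ 2 + B ^ 2 + s ^ 2 = C ^ 2) (t : ℝ) :
    0 < A * cos (2 * t) + B * sin (2 * t) + C := by
  rw [cos_two_mul_add_sin_two_mul_add]
  exact sin_cos_quadForm_pos (by nlinarith) (by linear_combination -hdisc) hs t

theorem integral_inv_cos_two_mul_add_sin_two_mul_add (hC : 0 < C) (hs : 0 < s)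
    (hdisc : A ^ 2 + B ^ 2 + s ^ 2 = C ^ 2) (r : ℝ) :
    ∫ t in r..r + π, 1 / (A * cos (2 * t) + B * sin (2 * t) + C) = π / s := by
  have hper : Function.Periodic (fun t ↦ 1 / (A * cos (2 * t) + B * sin (2 * t) + C)) π := by
    intro t
    dsimp only
    rw [mul_add, cos_add_two_pi, sin_add_two_pi]
  rw [hper.intervalIntegral_add_eq r (-(π / 2)), show -(π / 2) + π = π / 2 by ring]
  simp only [cos_two_mul_add_sin_two_mul_add]
  exact integral_inv_sin_cos_quadForm (by nlinarith) (by linear_combination -hdisc) hs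

end Real

/-- For the λ = λ̃ = 1 solution, the integral of 1/f² over any interval of length π is π. -/
theorem stmt_2 (a b : ℝ) (ha : 0 < a) (C : ℝ) (hC : C = (a ^ 2 + 1 / a ^ 2 + b ^ 2) / 2)
    (f : ℝ → ℝ)
    (hf : ∀ t, f t = Real.sqrt ((a ^ 2 - C) * Real.cos (2 * t) + a * b * Real.sin (2 * t) + C)) :
    ∀ r : ℝ, ∫ t in r..(r + π), 1 / f t ^ 2 = π := by
  intro r
  have hdisc : (a ^ 2 - C) ^ 2 + (a * b) ^ 2 + 1 ^ 2 = C ^ 2 := by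
    subst hC; field_simp; ring
  have hCpos : 0 < C := by rw [hC]; positivity
  have hf_sq (t : ℝ) : f t ^ 2 = (a ^ 2 - C) * cos (2 * t) + a * b * sin (2 * t) + C := by
    rw [hf, sq_sqrt (cos_two_mul_add_sin_two_mul_add_pos hCpos one_pos hdisc t).le]
  simp only [hf_sq]
  simpa using integral_inv_cos_two_mul_add_sin_two_mul_add hCpos one_pos hdisc r
end

section
/- For constants a > 0, b ∈ ℝ, and λ̃ ∈ ℝ, the function f(t) := √((a + b t)² + λ̃ (t/a)²), defined on the maximal interval around 0 where the radicand is positive, satisfies f''(t) = λ̃ / f(t)³, f(0) = a, and f'(0) = b. -/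
open Real

/-!
The radicand is the quadratic `q t = (b² + λ̃/a²) t² + 2ab t + a²`. For any quadratic
`q = A t² + B t + C` one has `(√q)'' = (2 q q'' - q'²) / (4 (√q)³)`, and the numerator
`4AC - B²` is constant; here it equals `4λ̃`.
-/

theorem hasDerivAt_quadratic (A B C t : ℝ) :
    HasDerivAt (fun x => A * x ^ 2 + B * x + C) (2 * A * t + B) t := by
  refine ((((hasDerivAt_pow 2 t).const_mul A).fun_add
    ((hasDerivAt_id' t).const_mul B)).add_const C).congr_deriv ?_
  norm_num
  ring

theorem hasDerivAt_sqrt_quadratic {A B C t : ℝ} (h : 0 < A * t ^ 2 + B * t + C) :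
    HasDerivAt (fun x => √(A * x ^ 2 + B * x + C))
      ((2 * A * t + B) / (2 * √(A * t ^ 2 + B * t + C))) t :=
  (hasDerivAt_quadratic A B C t).sqrt h.ne'

theorem deriv_deriv_sqrt_quadratic {A B C t : ℝ} (h : 0 < A * t ^ 2 + B * t + C) :
    deriv (deriv fun x => √(A * x ^ 2 + B * x + C)) t
      = (4 * A * C - B ^ 2) / (4 * √(A * t ^ 2 + B * t + C) ^ 3) := by
  have h_open : IsOpen {x : ℝ | 0 < A * x ^ 2 + B * x + C} :=
    isOpen_lt continuous_const (by fun_prop)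
  have h_deriv : (deriv fun x => √(A * x ^ 2 + B * x + C)) =ᶠ[nhds t]
      fun x => (2 * A * x + B) / (2 * √(A * x ^ 2 + B * x + C)) := by
    filter_upwards [h_open.mem_nhds h] with x hx
    exact (hasDerivAt_sqrt_quadratic hx).deriv
  have h_sqrt_pos : 0 < √(A * t ^ 2 + B * t + C) := sqrt_pos.mpr h
  have h_sq : √(A * t ^ 2 + B * t + C) ^ 2 = A * t ^ 2 + B * t + C := sq_sqrt h.le
  have h_num : HasDerivAt (fun x => 2 * A * x + B) (2 * A) t := by
    simpa using ((hasDerivAt_id t).const_mul (2 * A)).add_const B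
  rw [h_deriv.deriv_eq,
    (h_num.fun_div ((hasDerivAt_sqrt_quadratic h).const_mul 2) (by positivity)).deriv]
  generalize √(A * t ^ 2 + B * t + C) = s at h_sqrt_pos h_sq ⊢
  field_simp
  linear_combination (16 * A) * h_sq

/-- Explicit solution of f'' = λ̃/f³ with f(0)=a, f'(0)=b (Ricci-flat case λ = 0):
the ODE holds at every point where the radicand is positive. -/
theorem stmt_6 (a b lamt : ℝ) (ha : 0 < a) (f : ℝ → ℝ)
    (hf : ∀ t, f t = Real.sqrt ((a + b * t) ^ 2 + lamt * (t / a) ^ 2)) :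
    (0 < (a + b * 0) ^ 2 + lamt * (0 / a) ^ 2) ∧
    (∀ t : ℝ, 0 < (a + b * t) ^ 2 + lamt * (t / a) ^ 2 →
      deriv (deriv f) t = lamt / f t ^ 3) ∧
    f 0 = a ∧ deriv f 0 = b := by
  have h_radicand (t : ℝ) : (a + b * t) ^ 2 + lamt * (t / a) ^ 2
      = (b ^ 2 + lamt / a ^ 2) * t ^ 2 + 2 * a * b * t + a ^ 2 := by ring
  have hf_quadratic : f = fun t => √((b ^ 2 + lamt / a ^ 2) * t ^ 2 + 2 * a * b * t + a ^ 2) := by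
    funext t
    rw [hf, h_radicand]
  have h_pos_zero : 0 < (b ^ 2 + lamt / a ^ 2) * 0 ^ 2 + 2 * a * b * 0 + a ^ 2 := by
    simpa using pow_pos ha 2
  refine ⟨by rw [h_radicand]; exact h_pos_zero, fun t ht => ?_, ?_, ?_⟩
  · rw [h_radicand] at ht
    rw [hf_quadratic, deriv_deriv_sqrt_quadratic ht]
    field_simp
    ring
  · simp [hf, ha.le]
  · rw [hf_quadratic, (hasDerivAt_sqrt_quadratic h_pos_zero).deriv]
    simp [sqrt_sq ha.le, ha.ne']
end

section
/- For a > 0 and b ∈ ℝ, let C := (−a² + 1/a² + b²)/2 and f(t) := √((a²+C)cosh(2t) + ab·sinh(2t) − C). Then C² + 1 > C², a² + C = √(C² + 1 + (ab)²) ≥ √(C²+1) > |C|, f is defined and positive on all of ℝ, and ∫_{−∞}^{∞} 1/f(t)² dt < ∞. -/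
open Real MeasureTheory

/-!
Put `A = a² + C` and `B = ab`. The choice of `C` is exactly what makes `A² = C² + 1 + B²`, so
`A > √(B² + C²) =: D`. Since `(D cosh x + B sinh x)² - (B cosh x + D sinh x)² = D² - B² ≥ C²`,
we get `D cosh x + B sinh x ≥ C`, hence `A cosh x + B sinh x - C ≥ (A - D) cosh x`. As
`cosh (2t) ≥ 1 + 2t²`, the function `1 / f²` is dominated by a multiple of `1 / (1 + t²)`.
-/

lemma sq_le_sinh_sq (x : ℝ) : x ^ 2 ≤ sinh x ^ 2 := by
  rw [← sq_abs x, ← sq_abs (sinh x), abs_sinh]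
  exact pow_le_pow_left₀ (abs_nonneg x) (self_le_sinh_iff.2 (abs_nonneg x)) 2

lemma one_add_two_mul_sq_le_cosh_two_mul (x : ℝ) : 1 + 2 * x ^ 2 ≤ cosh (2 * x) := by
  rw [cosh_two_mul, cosh_sq]
  linarith [sq_le_sinh_sq x]

lemma le_mul_cosh_add_mul_sinh {B C D : ℝ} (hD : 0 ≤ D) (h : B ^ 2 + C ^ 2 ≤ D ^ 2) (x : ℝ) :
    C ≤ D * cosh x + B * sinh x := by
  have hcs : cosh x ^ 2 - sinh x ^ 2 = 1 := cosh_sq_sub_sinh_sq x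
  have hB : |B| ≤ D := abs_le_of_sq_le_sq (by nlinarith) hD
  have hsinh : |sinh x| ≤ cosh x := abs_le_of_sq_le_sq (by linarith) (cosh_pos x).le
  have hnonneg : 0 ≤ D * cosh x + B * sinh x := by
    have : |B * sinh x| ≤ D * cosh x := by
      rw [abs_mul]; exact mul_le_mul hB hsinh (abs_nonneg _) hD
    linarith [neg_abs_le (B * sinh x)]
  have hdiff : (D * cosh x + B * sinh x) ^ 2 - (B * cosh x + D * sinh x) ^ 2 = D ^ 2 - B ^ 2 := by
    linear_combination (D ^ 2 - B ^ 2) * hcs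
  have hsq : C ^ 2 ≤ (D * cosh x + B * sinh x) ^ 2 := by
    linarith [sq_nonneg (B * cosh x + D * sinh x)]
  exact le_of_sq_le_sq hsq hnonneg

lemma exists_pos_mul_cosh_le {A B C : ℝ} (hA : 0 ≤ A) (h : B ^ 2 + C ^ 2 < A ^ 2) :
    ∃ ε > 0, ∀ x, ε * cosh x ≤ A * cosh x + B * sinh x - C := by
  set D := √(B ^ 2 + C ^ 2)
  have hDA : D < A := by
    rw [← sqrt_sq hA]; exact sqrt_lt_sqrt (by positivity) h
  refine ⟨A - D, sub_pos.2 hDA, fun x => ?_⟩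
  have := le_mul_cosh_add_mul_sinh (B := B) (C := C) (sqrt_nonneg _) (sq_sqrt (by positivity)).ge x
  linarith

lemma lintegral_ofReal_one_div_lt_top {g : ℝ → ℝ} {ε : ℝ} (hε : 0 < ε)
    (hg : ∀ t, ε * (1 + t ^ 2) ≤ g t) :
    ∫⁻ t, ENNReal.ofReal (1 / g t) < ⊤ := by
  refine lt_of_le_of_lt (lintegral_mono fun t => ENNReal.ofReal_le_ofReal ?_)
    (integrable_inv_one_add_sq.const_mul ε⁻¹).lintegral_lt_top
  rw [one_div, ← mul_inv]
  exact inv_anti₀ (by positivity) (hg t)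

/-- Case λ = −1, λ̃ = 1: f is positive on all of ℝ and 1/f² has finite integral. -/
theorem stmt_15 (a b : ℝ) (ha : 0 < a) (C : ℝ)
    (hC : C = (-a ^ 2 + 1 / a ^ 2 + b ^ 2) / 2) (f : ℝ → ℝ)
    (hf : ∀ t, f t = Real.sqrt ((a ^ 2 + C) * Real.cosh (2 * t) + a * b * Real.sinh (2 * t) - C)) :
    C ^ 2 + 1 > C ^ 2 ∧
    a ^ 2 + C = Real.sqrt (C ^ 2 + 1 + (a * b) ^ 2) ∧
    a ^ 2 + C ≥ Real.sqrt (C ^ 2 + 1) ∧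
    Real.sqrt (C ^ 2 + 1) > |C| ∧
    (∀ t : ℝ, 0 < (a ^ 2 + C) * Real.cosh (2 * t) + a * b * Real.sinh (2 * t) - C) ∧
    (∫⁻ t : ℝ, ENNReal.ofReal (1 / f t ^ 2)) < ⊤ := by
  have hA : 0 < a ^ 2 + C := by
    rw [show a ^ 2 + C = (a ^ 2 + 1 / a ^ 2 + b ^ 2) / 2 by rw [hC]; ring]; positivity
  have hsq : (a ^ 2 + C) ^ 2 = C ^ 2 + 1 + (a * b) ^ 2 := by
    rw [hC]; field_simp; ring
  have hA_eq : a ^ 2 + C = √(C ^ 2 + 1 + (a * b) ^ 2) := by rw [← hsq, sqrt_sq hA.le]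
  obtain ⟨ε, hε, hlow⟩ := exists_pos_mul_cosh_le (B := a * b) (C := C) hA.le (by linarith)
  have hpos (t : ℝ) : 0 < (a ^ 2 + C) * cosh (2 * t) + a * b * sinh (2 * t) - C :=
    (mul_pos hε (cosh_pos _)).trans_le (hlow _)
  refine ⟨by linarith, hA_eq, ?_, ?_, hpos, ?_⟩
  · rw [hA_eq]; exact sqrt_le_sqrt (by nlinarith)
  · rw [← sqrt_sq_eq_abs]; exact sqrt_lt_sqrt (sq_nonneg _) (by linarith)
  · refine lintegral_ofReal_one_div_lt_top (g := fun t => f t ^ 2) hε fun t => ?_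
    rw [hf, sq_sqrt (hpos t).le]
    nlinarith [one_add_two_mul_sq_le_cosh_two_mul t, hlow (2 * t), sq_nonneg t]
end

section
/- Let f : ℝ → ℝ be positive and twice differentiable on all of ℝ with f''(t) − f(t) = −1/f(t)³ for all t, and suppose ∫_{−∞}^{0} 1/f(t)² dt = ∞ and ∫_{0}^{∞} 1/f(t)² dt = ∞. Then f(t) = 1 for all t. -/
open Real MeasureTheory Set Filter Topology

/-! With `E = f'² - f² - 1/f²` conserved, `g = f²` solves the linear equation `g'' = 4g + 2E`, so
`g = A e^{2t} + B e^{-2t} + c`. Positivity of `g` forces `A ≥ 0`, and if `A > 0` then `1/g` decays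
like `e^{-2t}`, contradicting the divergence of `∫₀^∞ 1/f²`; so `A = 0`, and symmetrically `B = 0`.
Hence `f` is constant and the equation reduces to `f⁴ = 1`. -/

theorem eq_mul_exp_of_hasDerivAt {p : ℝ → ℝ} {c : ℝ} (hp : ∀ t, HasDerivAt p (c * p t) t)
    (t : ℝ) : p t = p 0 * exp (c * t) := by
  have hderiv : ∀ s, HasDerivAt (fun s => p s * exp (-c * s)) 0 s := fun s =>
    ((hp s).fun_mul ((hasDerivAt_id' s).const_mul (-c)).exp).congr_deriv (by ring)
  have hconst := is_const_of_deriv_eq_zero (fun s => (hderiv s).differentiableAt)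
    (fun s => (hderiv s).deriv) t 0
  simp only [mul_zero, exp_zero, mul_one] at hconst
  rw [← hconst, mul_assoc, ← exp_add]
  simp

theorem exists_eq_exp_add_exp_of_hasDerivAt {h h' : ℝ → ℝ} {k : ℝ} (hk : k ≠ 0)
    (hh : ∀ t, HasDerivAt h (h' t) t) (hh' : ∀ t, HasDerivAt h' (k ^ 2 * h t) t) :
    ∃ A B : ℝ, ∀ t, h t = A * exp (k * t) + B * exp (-k * t) := by
  -- `h' + k h` and `h' - k h` solve the first-order equations `p' = k p` and `p' = -k p`.
  have hplus := eq_mul_exp_of_hasDerivAt (p := fun t => h' t + k * h t) (c := k) fun t =>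
    ((hh' t).fun_add ((hh t).const_mul k)).congr_deriv (by ring)
  have hminus := eq_mul_exp_of_hasDerivAt (p := fun t => h' t - k * h t) (c := -k) fun t =>
    ((hh' t).fun_sub ((hh t).const_mul k)).congr_deriv (by ring)
  refine ⟨(h' 0 + k * h 0) / (2 * k), -(h' 0 - k * h 0) / (2 * k), fun t => ?_⟩
  simp only [neg_mul] at hminus
  field_simp
  linear_combination hplus t - hminus t

namespace ErmakovPinney

variable {f f' : ℝ → ℝ} (hf : ∀ t, HasDerivAt f (f' t) t)
  (hf' : ∀ t, HasDerivAt f' (f t - 1 / f t ^ 3) t) (hne : ∀ t, f t ≠ 0)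
include hf hf' hne

theorem energy_eq (t : ℝ) :
    f' t ^ 2 - f t ^ 2 - 1 / f t ^ 2 = f' 0 ^ 2 - f 0 ^ 2 - 1 / f 0 ^ 2 := by
  have hderiv : ∀ s, HasDerivAt (fun s => f' s ^ 2 - f s ^ 2 - 1 / f s ^ 2) 0 s := by
    intro s
    have hsq := (hf s).fun_pow 2
    refine ((((hf' s).fun_pow 2).fun_sub hsq).fun_sub
      ((hasDerivAt_const s 1).fun_div hsq (pow_ne_zero 2 (hne s)))).congr_deriv ?_
    field_simp [hne s]
    ring
  exact is_const_of_deriv_eq_zero (fun s => (hderiv s).differentiableAt)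
    (fun s => (hderiv s).deriv) t 0

theorem exists_sq_eq_exp_add_exp :
    ∃ A B c : ℝ, ∀ t, f t ^ 2 = A * exp (2 * t) + B * exp (-2 * t) + c := by
  set E := f' 0 ^ 2 - f 0 ^ 2 - 1 / f 0 ^ 2
  obtain ⟨A, B, hAB⟩ := exists_eq_exp_add_exp_of_hasDerivAt (h := fun t => f t ^ 2 + E / 2)
    (h' := fun t => 2 * f t * f' t) two_ne_zero
    (fun t => (((hf t).fun_pow 2).add_const (E / 2)).congr_deriv (by ring))
    (fun t => (((hf t).const_mul 2).fun_mul (hf' t)).congr_deriv (by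
      have hcube : f t * (1 / f t ^ 3) = 1 / f t ^ 2 := by field_simp [hne t]
      linear_combination 2 * energy_eq hf hf' hne t - 2 * hcube))
  exact ⟨A, B, -(E / 2), fun t => by linarith [hAB t]⟩

end ErmakovPinney

theorem lintegral_Ioi_comp_neg (g : ℝ → ENNReal) (a : ℝ) :
    ∫⁻ t in Ioi a, g (-t) = ∫⁻ t in Iio (-a), g t := by
  rw [(Measure.measurePreserving_neg volume).setLIntegral_comp_emb measurableEmbedding_neg,
    image_neg_Ioi]

section ExpSum

variable {φ : ℝ → ℝ} {A B c : ℝ} (hφ : ∀ t, φ t = A * exp (2 * t) + B * exp (-2 * t) + c)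
include hφ

theorem tendsto_expSum_mul_exp_neg_two_mul :
    Tendsto (fun t => φ t * exp (-2 * t)) atTop (𝓝 A) := by
  have hdecay : Tendsto (fun t : ℝ => exp (-2 * t)) atTop (𝓝 0) :=
    tendsto_exp_atBot.comp (tendsto_id.const_mul_atTop_of_neg (by norm_num))
  have hlim := (tendsto_const_nhds (x := A)).add ((hdecay.pow 2).const_mul B) |>.add
    (hdecay.const_mul c)
  simp only [ne_eq, OfNat.ofNat_ne_zero, not_false_eq_true, zero_pow, mul_zero, add_zero] at hlim
  refine hlim.congr fun t => ?_
  have hinv : exp (2 * t) * exp (-2 * t) = 1 := by rw [← exp_add]; simp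
  rw [hφ]
  linear_combination -A * hinv

theorem expSum_coeff_nonneg_of_forall_pos (hpos : ∀ t, 0 < φ t) : 0 ≤ A :=
  ge_of_tendsto (tendsto_expSum_mul_exp_neg_two_mul hφ)
    (Eventually.of_forall fun t => (mul_pos (hpos t) (exp_pos _)).le)

theorem integrableOn_Ioi_one_div_expSum (hA : 0 < A) (hpos : ∀ t, 0 < φ t) :
    IntegrableOn (fun t => 1 / φ t) (Ioi 0) := by
  have hcont : Continuous φ := (continuous_congr hφ).mpr (by fun_prop)
  refine integrable_of_isBigO_exp_neg two_pos
    (continuous_const.div hcont fun t => (hpos t).ne').continuousOn ?_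
  refine Asymptotics.isBigO_of_div_tendsto_nhds_of_ne_zero
    ((tendsto_expSum_mul_exp_neg_two_mul hφ).congr fun t => ?_) hA.ne'
  field_simp [(hpos t).ne']

theorem expSum_coeff_eq_zero_of_lintegral_Ioi_eq_top (hpos : ∀ t, 0 < φ t)
    (htop : ∫⁻ t in Ioi 0, ENNReal.ofReal (1 / φ t) = ⊤) : A = 0 := by
  refine ((expSum_coeff_nonneg_of_forall_pos hφ hpos).eq_or_lt.resolve_right fun hA => ?_).symm
  exact (integrableOn_Ioi_one_div_expSum hφ hA hpos).setLIntegral_lt_top.ne htop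

end ExpSum

/-- Projective rigidity (Theorem 1.3(i)): a positive global solution of
f'' − f = −1/f³ with both tail integrals of 1/f² divergent is f ≡ 1. -/
theorem stmt_16 (f : ℝ → ℝ) (hf : Differentiable ℝ f) (hf' : Differentiable ℝ (deriv f))
    (hpos : ∀ t, 0 < f t)
    (hode : ∀ t, deriv (deriv f) t - f t = -1 / f t ^ 3)
    (hneg : (∫⁻ t in Iio (0:ℝ), ENNReal.ofReal (1 / f t ^ 2)) = ⊤)
    (hposint : (∫⁻ t in Ioi (0:ℝ), ENNReal.ofReal (1 / f t ^ 2)) = ⊤) :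
    ∀ t, f t = 1 := by
  have hf'' : ∀ t, HasDerivAt (deriv f) (f t - 1 / f t ^ 3) t := fun t =>
    (hf' t).hasDerivAt.congr_deriv (by linear_combination hode t)
  obtain ⟨A, B, c, hsq⟩ :=
    ErmakovPinney.exists_sq_eq_exp_add_exp (fun t => (hf t).hasDerivAt) hf'' fun t => (hpos t).ne'
  have hsq_pos : ∀ t, 0 < f t ^ 2 := fun t => pow_pos (hpos t) 2
  have hA : A = 0 := expSum_coeff_eq_zero_of_lintegral_Ioi_eq_top hsq hsq_pos hposint
  have hB : B = 0 := by
    refine expSum_coeff_eq_zero_of_lintegral_Ioi_eq_top (φ := fun t => f (-t) ^ 2)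
      (A := B) (B := A) (c := c) (fun t => by rw [hsq]; ring_nf) (fun t => hsq_pos _) ?_
    rwa [lintegral_Ioi_comp_neg (fun t => ENNReal.ofReal (1 / f t ^ 2)), neg_zero]
  have hconst : ∀ t, f t = f 0 := fun t =>
    (pow_left_inj₀ (hpos t).le (hpos 0).le two_ne_zero).mp (by rw [hsq, hsq, hA, hB]; simp)
  have hderiv : ∀ t, deriv (deriv f) t = 0 := by
    rw [show f = fun _ => f 0 from funext hconst]
    simp
  intro t
  have hquartic : f t ^ 4 = 1 := by
    have := hode t
    rw [hderiv] at this
    field_simp [(hpos t).ne'] at this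
    linear_combination -this
  exact (pow_eq_one_iff_of_nonneg (hpos t).le four_ne_zero).mp hquartic
end
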